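/- Let Z and W be Hermitian matrices on a bipartite finite-dimensional space H_S ⊗ H_0 with −υW ⪯ Z ⪯ υW (so in particular W ⪰ 0), for υ ≥ 0. Then ‖Tr_{H_S}(Z)‖₁ ≤ υ·Tr(W), i.e., the trace norm of the partial trace of Z is bounded by υ times the trace of W. -/

import Mathlib

open Matrix
open scoped Kronecker ComplexOrder

/-- Trace norm (Schatten 1-norm) of a complex matrix: `Tr √(AᴴA)`. -/
noncomputable def traceNorm {n : Type*} [Fintype n] [DecidableEq n]
    (A : Matrix n n ℂ) : ℝ :=
  (((Matrix.posSemidef_conjTranspose_mul_self A).1.eigenvectorUnitary.1 *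
    diagonal (((↑) : ℝ → ℂ) ∘ (√·) ∘ (Matrix.posSemidef_conjTranspose_mul_self A).1.eigenvalues) *
    (star (Matrix.posSemidef_conjTranspose_mul_self A).1.eigenvectorUnitary : Matrix n n ℂ)).trace).re

/-- Von Neumann entropy (natural log) of a matrix, via eigenvalues when Hermitian. -/
noncomputable def vNEntropy {n : Type*} [Fintype n] [DecidableEq n]
    (ρ : Matrix n n ℂ) : ℝ := by
  classical exact
    if h : ρ.IsHermitian then ∑ i, Real.negMulLog (h.eigenvalues i) else 0

/-- The partial trace over the first tensor factor. -/
noncomputable def ptraceS {s o : Type*} [Fintype s]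
    (M : Matrix (s × o) (s × o) ℂ) : Matrix o o ℂ :=
  Matrix.of fun i j => ∑ a : s, M (a, i) (a, j)

/-- The unitary conjugation channel `ρ ↦ U ρ Uᴴ` as a linear endomorphism. -/
noncomputable def uch {n : Type*} [Fintype n] [DecidableEq n]
    (U : Matrix n n ℂ) : Matrix n n ℂ →ₗ[ℂ] Matrix n n ℂ where
  toFun := fun ρ => U * ρ * Uᴴ
  map_add' := fun ρ σ => by simp [Matrix.add_mul, Matrix.mul_add]
  map_smul' := fun c ρ => by simp [Matrix.mul_smul, Matrix.smul_mul]

/-- Extension `Φ ⊗ id` of a map on matrices to a bipartite system (function form). -/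
noncomputable def tensorExt {n r : Type*}
    (Φ : Matrix n n ℂ →ₗ[ℂ] Matrix n n ℂ)
    (M : Matrix (n × r) (n × r) ℂ) : Matrix (n × r) (n × r) ℂ :=
  Matrix.of fun p q => Φ (Matrix.of fun a b => M (a, p.2) (b, q.2)) p.1 q.1

/-- Diamond norm: supremum of trace norm of `(Φ ⊗ id)` over bipartite states,
with reference system of the same dimension. -/
noncomputable def diamondNorm {n : Type*} [Fintype n] [DecidableEq n]
    (Φ : Matrix n n ℂ →ₗ[ℂ] Matrix n n ℂ) : ℝ :=
  ⨆ M : {M : Matrix (n × n) (n × n) ℂ // M.PosSemidef ∧ M.trace = 1},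
    traceNorm (tensorExt Φ M.1)

/-- Trace-preserving map on matrices. -/
def IsTracePreserving {n : Type*} [Fintype n]
    (Φ : Matrix n n ℂ →ₗ[ℂ] Matrix n n ℂ) : Prop :=
  ∀ X, (Φ X).trace = X.trace

/-- Complete positivity (via the extension to an equal-size reference system). -/
def IsCompletelyPositive {n : Type*} [Fintype n] [DecidableEq n]
    (Φ : Matrix n n ℂ →ₗ[ℂ] Matrix n n ℂ) : Prop :=
  ∀ M : Matrix (n × n) (n × n) ℂ, M.PosSemidef → (tensorExt Φ M).PosSemidef

/-- Operator (spectral) norm of a complex matrix. -/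
noncomputable def opNorm {n : Type*} [Fintype n] [DecidableEq n]
    (A : Matrix n n ℂ) : ℝ :=
  ‖Matrix.toEuclideanCLM (𝕜 := ℂ) A‖

/-! Since the partial trace is a positive linear map, `−υ Tr_S W ⪯ Tr_S Z ⪯ υ Tr_S W`.
For Hermitian `M` with `−B ⪯ M ⪯ B`, read both inequalities on the diagonal of an eigenbasis of
`M`: each `|λᵢ|` is bounded by the corresponding diagonal entry of `B`, and summing gives
`‖M‖₁ = ∑ |λᵢ| ≤ Tr B`. Finally `Tr (Tr_S W) = Tr W`. -/

namespace Matrix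

section Unitary

variable {R : Type*} [CommRing R] [StarRing R] {n : Type*} [Fintype n] [DecidableEq n]

lemma trace_conjStarAlgAut (u : unitary (Matrix n n R)) (A : Matrix n n R) :
    (Unitary.conjStarAlgAut R _ u A).trace = A.trace := by
  rw [Unitary.conjStarAlgAut_apply, trace_mul_cycle, Unitary.coe_star_mul_self, Matrix.one_mul]

lemma PosSemidef.conjStarAlgAut [PartialOrder R] [StarOrderedRing R] {A : Matrix n n R}
    (hA : A.PosSemidef) (u : unitary (Matrix n n R)) :
    (Unitary.conjStarAlgAut R _ u A).PosSemidef := by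
  rw [Unitary.conjStarAlgAut_apply, star_eq_conjTranspose]
  exact hA.mul_mul_conjTranspose_same _

end Unitary

section Hermitian

variable {𝕜 : Type*} [RCLike 𝕜] {n : Type*} [Fintype n] [DecidableEq n]

lemma IsHermitian.trace_cfc {A : Matrix n n 𝕜} (hA : A.IsHermitian) (f : ℝ → ℝ) :
    (hA.cfc f).trace = ∑ i, (f (hA.eigenvalues i) : 𝕜) := by
  rw [IsHermitian.cfc, trace_conjStarAlgAut, trace_diagonal]
  rfl

lemma sum_abs_le_re_trace_of_sandwich {A : Matrix n n 𝕜} {d : n → ℝ}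
    (h₁ : (A - diagonal (RCLike.ofReal ∘ d)).PosSemidef)
    (h₂ : (A + diagonal (RCLike.ofReal ∘ d)).PosSemidef) :
    ∑ i, |d i| ≤ RCLike.re A.trace := by
  rw [trace, map_sum]
  refine Finset.sum_le_sum fun i _ => abs_le.mpr ⟨?_, ?_⟩
  · have := (RCLike.nonneg_iff.mp (h₂.diag_nonneg (i := i))).1
    simp only [add_apply, diagonal_apply_eq, Function.comp_apply, map_add, RCLike.ofReal_re] at this
    simp only [diag_apply]
    linarith
  · have := (RCLike.nonneg_iff.mp (h₁.diag_nonneg (i := i))).1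
    simp only [sub_apply, diagonal_apply_eq, Function.comp_apply, map_sub, RCLike.ofReal_re] at this
    simp only [diag_apply]
    linarith

lemma IsHermitian.sum_abs_eigenvalues_le_of_sandwich {M B : Matrix n n 𝕜} (hM : M.IsHermitian)
    (h₁ : (B - M).PosSemidef) (h₂ : (B + M).PosSemidef) :
    ∑ i, |hM.eigenvalues i| ≤ RCLike.re B.trace := by
  rw [← trace_conjStarAlgAut (star hM.eigenvectorUnitary) B]
  apply sum_abs_le_re_trace_of_sandwich
  · rw [← hM.conjStarAlgAut_star_eigenvectorUnitary, ← map_sub]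
    exact h₁.conjStarAlgAut _
  · rw [← hM.conjStarAlgAut_star_eigenvectorUnitary, ← map_add]
    exact h₂.conjStarAlgAut _

end Hermitian

end Matrix

section TraceNorm

variable {n : Type*} [Fintype n] [DecidableEq n]

lemma traceNorm_eq_re_trace_cfc_sqrt (A : Matrix n n ℂ) :
    traceNorm A = ((posSemidef_conjTranspose_mul_self A).1.cfc Real.sqrt).trace.re :=
  rfl

lemma Matrix.IsHermitian.traceNorm_eq_sum_abs_eigenvalues {A : Matrix n n ℂ} (hA : A.IsHermitian) :
    traceNorm A = ∑ i, |hA.eigenvalues i| := by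
  have hsqrt : (posSemidef_conjTranspose_mul_self A).1.cfc Real.sqrt = hA.cfc (|·|) := by
    rw [← IsHermitian.cfc_eq, ← IsHermitian.cfc_eq, hA.eq, ← sq, ← cfc_comp_pow Real.sqrt 2 A]
    simp only [Real.sqrt_sq_eq_abs]
  rw [traceNorm_eq_re_trace_cfc_sqrt, hsqrt, hA.trace_cfc, Complex.re_sum]
  simp

lemma Matrix.IsHermitian.traceNorm_le_of_sandwich {M B : Matrix n n ℂ} (hM : M.IsHermitian)
    (h₁ : (B - M).PosSemidef) (h₂ : (B + M).PosSemidef) :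
    traceNorm M ≤ B.trace.re :=
  hM.traceNorm_eq_sum_abs_eigenvalues ▸ hM.sum_abs_eigenvalues_le_of_sandwich h₁ h₂

end TraceNorm

section PartialTrace

variable {s o : Type*} [Fintype s]

lemma ptraceS_eq_sum_submatrix (M : Matrix (s × o) (s × o) ℂ) :
    ptraceS M = ∑ a, M.submatrix (Prod.mk a) (Prod.mk a) := by
  ext i j
  simp [ptraceS, Matrix.sum_apply]

lemma ptraceS_add (M N : Matrix (s × o) (s × o) ℂ) : ptraceS (M + N) = ptraceS M + ptraceS N := by
  ext i j
  simp [ptraceS, Finset.sum_add_distrib]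

lemma ptraceS_sub (M N : Matrix (s × o) (s × o) ℂ) : ptraceS (M - N) = ptraceS M - ptraceS N := by
  ext i j
  simp [ptraceS, Finset.sum_sub_distrib]

lemma trace_ptraceS [Fintype o] (M : Matrix (s × o) (s × o) ℂ) : (ptraceS M).trace = M.trace := by
  simp only [trace, diag, ptraceS, of_apply, Fintype.sum_prod_type]
  exact Finset.sum_comm

lemma Matrix.IsHermitian.ptraceS {M : Matrix (s × o) (s × o) ℂ} (hM : M.IsHermitian) :
    (ptraceS M).IsHermitian := by
  rw [ptraceS_eq_sum_submatrix]
  exact isSelfAdjoint_sum _ fun a _ => hM.submatrix (Prod.mk a)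

lemma Matrix.PosSemidef.ptraceS [Fintype o] {M : Matrix (s × o) (s × o) ℂ} (hM : M.PosSemidef) :
    (ptraceS M).PosSemidef := by
  rw [ptraceS_eq_sum_submatrix]
  exact posSemidef_sum _ fun a _ => hM.submatrix (Prod.mk a)

end PartialTrace

theorem traceNorm_ptrace_le_of_loewner_sandwich_general {s o : Type*}
    [Fintype s] [Fintype o] [DecidableEq o]
    (Z W : Matrix (s × o) (s × o) ℂ)
    (hZ : Z.IsHermitian)
    (υ : ℝ)
    (h₁ : (υ • W - Z).PosSemidef) (h₂ : (υ • W + Z).PosSemidef) :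
    traceNorm (ptraceS Z) ≤ υ * W.trace.re := by
  have hsandwich := hZ.ptraceS.traceNorm_le_of_sandwich (B := ptraceS (υ • W))
    (ptraceS_sub (υ • W) Z ▸ h₁.ptraceS) (ptraceS_add (υ • W) Z ▸ h₂.ptraceS)
  rwa [trace_ptraceS, trace_smul, Complex.real_smul, Complex.re_ofReal_mul] at hsandwich

/-- If Hermitian `Z, W` on a bipartite space satisfy `−υW ⪯ Z ⪯ υW` (so `W ⪰ 0`),
then `‖Tr_S(Z)‖₁ ≤ υ·Tr(W)`. -/
theorem traceNorm_ptrace_le_of_loewner_sandwich {s o : Type*}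
    [Fintype s] [DecidableEq s] [Fintype o] [DecidableEq o]
    (Z W : Matrix (s × o) (s × o) ℂ)
    (hZ : Z.IsHermitian) (hW : W.IsHermitian)
    (υ : ℝ) (hυ : 0 ≤ υ)
    (h₁ : (υ • W - Z).PosSemidef) (h₂ : (υ • W + Z).PosSemidef) :
    traceNorm (ptraceS Z) ≤ υ * W.trace.re :=
  traceNorm_ptrace_le_of_loewner_sandwich_general Z W hZ υ h₁ h₂
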